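/- For L ≥ 5, the state φ = (|0…0⟩+|1…1⟩) + Σ_{l=2}^{L} (|1 0…0 1_l 0…0⟩ + |0 1…1 0_l 1…1⟩) ∈ (ℂ²)^⊗L has all L reduced one-qubit density matrices equal to (1/2)I (i.e., maximally mixed). -/

import Mathlib

open Matrix BigOperators

/-- The (unnormalized) reduced one-qubit density matrix of the `l`-th qubit of
`φ ∈ (ℂ²)^⊗L`: the partial trace of `|φ⟩⟨φ|` over all qubits except the `l`-th. -/
noncomputable def reducedDensity (L : ℕ) (φ : (Fin L → Fin 2) → ℂ) (l : Fin L) :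
    Matrix (Fin 2) (Fin 2) ℂ :=
  fun i j => ∑ s : Fin L → Fin 2,
    if s l = i then φ s * star (φ (Function.update s l j)) else 0

/-- Basis state with qubits `1` and `l` excited and all others in the ground state. -/
def uPat (L : ℕ) [NeZero L] (l : Fin L) : Fin L → Fin 2 :=
  fun m => if m = 0 ∨ m = l then 1 else 0

/-- The state `φ = (|0…0⟩+|1…1⟩) + Σ_{l=2}^{L} (|1 0…0 1_l 0…0⟩ + |0 1…1 0_l 1…1⟩)`. -/
noncomputable def stablePhi (L : ℕ) [NeZero L] : (Fin L → Fin 2) → ℂ :=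
  fun s => (if s = (fun _ => 0) then 1 else 0) + (if s = (fun _ => 1) then 1 else 0)
    + ∑ l ∈ Finset.univ.erase 0,
        ((if s = uPat L l then 1 else 0)
          + (if s = (fun m => 1 - uPat L l m) then 1 else 0))

/-!
The state is the indicator function of a set `S` of `2L` computational basis strings: the strings
`P_k` (with `P_0 = 0` and `P_k = uPat k`) and their complements. The diagonal entries of the
reduced density matrix of qubit `l` count the strings of `S` with a given `l`-th bit; since `S` is
closed under flipping all bits, both counts are `|S| / 2`. An off-diagonal entry counts pairs of
strings of `S` differing exactly at qubit `l`, and there are none: for `L ≥ 5` two strings of `S`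
that agree off one qubit are equal.
-/

open Finset

section IndicatorState

variable {L : ℕ} (S : Finset (Fin L → Fin 2))

def indicatorState : (Fin L → Fin 2) → ℂ := fun s => if s ∈ S then 1 else 0

lemma sum_norm_indicatorState_sq : ∑ s, (‖indicatorState S s‖ : ℂ) ^ 2 = #S := by
  simp [indicatorState, apply_ite]

variable {S}

lemma two_mul_card_filter_apply_eq (hflip : ∀ s ∈ S, 1 - s ∈ S) (l : Fin L) (i : Fin 2) :
    2 * #{s ∈ S | s l = i} = #S := by
  have one_sub_eq_iff : ∀ a : Fin 2, 1 - a = i ↔ ¬ a = i := by revert i; decide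
  have hcard : #{s ∈ S | s l = i} = #{s ∈ S | ¬ s l = i} := by
    refine card_nbij' (1 - ·) (1 - ·) ?_ ?_ (fun s _ => sub_sub_cancel 1 s)
      (fun s _ => sub_sub_cancel 1 s)
    all_goals
      intro s hs
      simp only [coe_filter, Set.mem_ofPred_eq, Pi.sub_apply, Pi.one_apply] at hs ⊢
      simp [hflip s hs.1, one_sub_eq_iff, hs.2]
  rw [two_mul]
  nth_rw 2 [hcard]
  exact card_filter_add_card_filter_not _

lemma reducedDensity_indicatorState_apply_self (l : Fin L) (i : Fin 2) :
    reducedDensity L (indicatorState S) l i i = #{s ∈ S | s l = i} := by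
  have hfilter : {s ∈ S | s l = i} = ({s | s ∈ S ∧ s l = i} : Finset _) := by ext; simp
  rw [hfilter, natCast_card_filter]
  refine sum_congr rfl fun s _ => ?_
  by_cases hs : s l = i
  · subst hs
    simp [indicatorState]
  · simp [hs]

lemma reducedDensity_indicatorState_apply_of_ne (l : Fin L)
    (hsep : ∀ s ∈ S, ∀ t ∈ S, (∀ m ≠ l, s m = t m) → s = t) {i j : Fin 2} (hij : i ≠ j) :
    reducedDensity L (indicatorState S) l i j = 0 := by
  refine sum_eq_zero fun s _ => ite_eq_right_iff.mpr fun hs => ?_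
  by_cases hmem : s ∈ S ∧ Function.update s l j ∈ S
  · have hs_eq := hsep s hmem.1 _ hmem.2 fun m hm => (Function.update_of_ne hm j s).symm
    exact absurd (hs.symm.trans ((congrFun hs_eq l).trans (Function.update_self l j s))) hij
  · simp only [indicatorState]
    split_ifs <;> simp_all

lemma reducedDensity_indicatorState (hflip : ∀ s ∈ S, 1 - s ∈ S) (l : Fin L)
    (hsep : ∀ s ∈ S, ∀ t ∈ S, (∀ m ≠ l, s m = t m) → s = t) :
    reducedDensity L (indicatorState S) l = ((#S : ℂ) / 2) • 1 := by
  ext i j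
  by_cases hij : i = j
  · subst hij
    rw [reducedDensity_indicatorState_apply_self, ← two_mul_card_filter_apply_eq hflip l i]
    simp
  · rw [reducedDensity_indicatorState_apply_of_ne l hsep hij]
    simp [one_apply_ne hij]

lemma inv_smul_reducedDensity_indicatorState (hS : S.Nonempty) (hflip : ∀ s ∈ S, 1 - s ∈ S)
    (l : Fin L) (hsep : ∀ s ∈ S, ∀ t ∈ S, (∀ m ≠ l, s m = t m) → s = t) :
    (∑ s, (‖indicatorState S s‖ : ℂ) ^ 2)⁻¹ • reducedDensity L (indicatorState S) l
      = (1 / 2 : ℂ) • 1 := by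
  have hcard : (#S : ℂ) ≠ 0 := by exact_mod_cast hS.card_pos.ne'
  rw [sum_norm_indicatorState_sq, reducedDensity_indicatorState hflip l hsep, smul_smul]
  congr 1
  field_simp

end IndicatorState

section Pattern

variable {L : ℕ} [NeZero L]

/-- `stablePattern (c, k)` is `P_k` shifted by the constant `c`, where `P_0 = 0` and `P_k = uPat k`
for `k ≠ 0`; `c = 1` gives the bit-flipped summands of `stablePhi`. -/
def stablePattern (p : Fin 2 × Fin L) : Fin L → Fin 2 :=
  fun m => p.1 + if p.2 ≠ 0 ∧ (m = 0 ∨ m = p.2) then 1 else 0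

lemma stablePattern_apply_of_ne (c : Fin 2) {k m : Fin L} (h0 : m ≠ 0) (hk : m ≠ k) :
    stablePattern (c, k) m = c := by
  simp [stablePattern, h0, hk]

lemma stablePattern_apply_ne (c : Fin 2) {k k' : Fin L} (h : k ≠ k') :
    stablePattern (c, k) k ≠ stablePattern (c, k') k := by
  by_cases hk : k = 0
  · subst hk
    simp [stablePattern, Ne.symm h]
  · simp [stablePattern, hk, h]

lemma stablePattern_eq_of_eqOn (hL : 5 ≤ L) {p q : Fin 2 × Fin L} {l : Fin L}
    (h : ∀ m ≠ l, stablePattern p m = stablePattern q m) : p = q := by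
  obtain ⟨c, k⟩ := p
  obtain ⟨c', k'⟩ := q
  -- a qubit outside `{0, k, k', l}` carries the constant bits `c` and `c'`
  obtain ⟨m, -, hm⟩ := exists_mem_notMem_of_card_lt_card
    ((card_le_four (a := 0) (b := k) (c := k') (d := l)).trans_lt
      (by rw [card_univ, Fintype.card_fin]; omega))
  simp only [mem_insert, mem_singleton, not_or] at hm
  obtain ⟨hm0, hmk, hmk', hml⟩ := hm
  have hc : c = c' := by
    simpa [stablePattern_apply_of_ne _ hm0 hmk, stablePattern_apply_of_ne _ hm0 hmk'] using
      h m hml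
  subst hc
  by_contra hne
  have hkk' : k ≠ k' := fun e => hne (congrArg _ e)
  by_cases hkl : k = l
  · exact stablePattern_apply_ne c hkk'.symm (h k' (hkl ▸ hkk'.symm)).symm
  · exact stablePattern_apply_ne c hkk' (h k hkl)

lemma stablePattern_injective (hL : 5 ≤ L) : Function.Injective (stablePattern (L := L)) :=
  fun _ _ h => stablePattern_eq_of_eqOn hL (l := 0) fun m _ => congrFun h m

lemma one_sub_stablePattern (p : Fin 2 × Fin L) :
    1 - stablePattern p = stablePattern (1 - p.1, p.2) := by
  funext m
  simp only [Pi.sub_apply, Pi.one_apply, stablePattern]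
  generalize p.1 = c
  split_ifs <;> revert c <;> decide

lemma stablePhi_eq_sum_stablePattern (s : Fin L → Fin 2) :
    stablePhi L s = ∑ p : Fin 2 × Fin L, if s = stablePattern p then 1 else 0 := by
  have hzero (c : Fin 2) : stablePattern (c, 0) = fun _ : Fin L => c := by
    funext m; simp [stablePattern]
  have hpair {k : Fin L} (hk : k ≠ 0) : stablePattern (0, k) = uPat L k := by
    funext m; simp [stablePattern, uPat, hk]
  have hflip {k : Fin L} (hk : k ≠ 0) : stablePattern (1, k) = fun m => 1 - uPat L k m := by
    funext m; simp [stablePattern, uPat, hk]; split_ifs <;> decide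
  rw [Fintype.sum_prod_type, Fin.sum_univ_two, ← add_sum_erase _ _ (mem_univ 0),
    ← add_sum_erase _ _ (mem_univ 0), hzero, hzero, stablePhi, sum_add_distrib]
  have hsum {f g : Fin L → Fin L → Fin 2} (hfg : ∀ k ≠ 0, f k = g k) :
      ∑ k ∈ univ.erase 0, (if s = f k then (1 : ℂ) else 0) =
        ∑ k ∈ univ.erase 0, if s = g k then 1 else 0 :=
    sum_congr rfl fun k hk => by rw [hfg k (ne_of_mem_erase hk)]
  rw [hsum fun k => hpair, hsum fun k => hflip]
  ring

lemma stablePhi_eq_indicatorState (hL : 5 ≤ L) :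
    stablePhi L = indicatorState (univ.image stablePattern) := by
  funext s
  rw [stablePhi_eq_sum_stablePattern, indicatorState]
  split_ifs with hs
  · obtain ⟨p, -, rfl⟩ := mem_image.mp hs
    simp [(stablePattern_injective hL).eq_iff]
  · exact sum_eq_zero fun p _ => if_neg fun h => hs (mem_image.mpr ⟨p, mem_univ p, h.symm⟩)

end Pattern

/-- For `L ≥ 5` all `L` (normalized) reduced one-qubit density matrices of the state
`stablePhi L` are maximally mixed, i.e. equal to `(1/2)I`. -/
theorem stmt14 (L : ℕ) [NeZero L] (hL : 5 ≤ L) :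
    ∀ l : Fin L,
      ((∑ s : Fin L → Fin 2, (‖stablePhi L s‖ : ℂ) ^ 2))⁻¹ •
          reducedDensity L (stablePhi L) l
        = (1/2 : ℂ) • (1 : Matrix (Fin 2) (Fin 2) ℂ) := by
  intro l
  rw [stablePhi_eq_indicatorState hL]
  refine inv_smul_reducedDensity_indicatorState
    ⟨stablePattern 0, mem_image_of_mem _ (mem_univ _)⟩ ?_ l ?_
  · simp only [mem_image, mem_univ, true_and, forall_exists_index, forall_apply_eq_imp_iff]
    exact fun p => ⟨_, (one_sub_stablePattern p).symm⟩
  · simp only [mem_image, mem_univ, true_and, forall_exists_index, forall_apply_eq_imp_iff]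
    exact fun p q h => congrArg stablePattern (stablePattern_eq_of_eqOn hL h)
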